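/- Let H be a hb-graph on Fin n with hb-edges e_1, …, e_p of m-cardinalities ρ_k satisfying 1 ≤ ρ_k ≤ r, where r ≥ 2 is the m-range of H, and let A_str be the e-adjacency hypermatrix of its straightforward m-uniformized hb-graph with single null vertex N_1. Then for every j with 1 ≤ j ≤ r−1, the sum of the entries of A_str over all tuples t whose first coordinate is N_1 and such that exactly r − j − 1 of the remaining r − 1 coordinates equal N_1 is (r − j) · |{k : ρ_k = j}|; hence |{k : ρ_k = j}| is retrieved by dividing this sum by r − j. -/

import Mathlib

/-
Expanding `A_str` over the hb-edges, the `k`-th contribution counts the realizations `t` of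
`ê_k` with `t 0 = N_1` and exactly `r - q - 1` further null coordinates. Such a realization has
`ê_k(N_1) - 1 = r - ρ_k - 1` further null coordinates, so only the hb-edges with `ρ_k = q`
contribute. Deleting the first coordinate, the realizations of a multiplicity function `f` of
total `r` that start at `v` are the realizations of `f` with `f v` lowered by one, so the
multinomial count `(∏ f w !) · #realizations = r!` shows that there are
`f v · (r - 1)! / ∏ f w !` of them; each hb-edge with `ρ_k = q` thus contributes exactly `r - q`.
-/

/-- The hb-edges of the straightforward m-uniformized hb-graph: the original
multiplicities on the original vertices `Sum.inl i`, and multiplicity `r − ρ_k`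
on the single null vertex `N_1 = Sum.inr ()`, where `ρ_k = Σ_j e_k(j)` is the
m-cardinality of the hb-edge. -/
def strEdge (n p r : ℕ) (e : Fin p → Fin n → ℕ) (k : Fin p) :
    Fin n ⊕ Unit → ℕ
  | Sum.inl i => e k i
  | Sum.inr _ => r - ∑ j, e k j

/-- The e-adjacency hypermatrix of the straightforward m-uniformized hb-graph:
`A_str(t) = Σ_k (∏_v ê_k(v)!)/(r−1)! · [t realizes ê_k]`. -/
noncomputable def Astr (n p r : ℕ) (e : Fin p → Fin n → ℕ)
    (t : Fin r → Fin n ⊕ Unit) : ℝ :=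
  ∑ k, if ∀ v, (Finset.univ.filter (fun s => t s = v)).card = strEdge n p r e k v
       then ((∏ v, (strEdge n p r e k v).factorial : ℕ) : ℝ) / (r - 1).factorial
       else 0

open Finset Function Nat

section Realizations

variable {V : Type*} [DecidableEq V]

lemma card_filter_fin_succ {r : ℕ} (t : Fin (r + 1) → V) (w : V) :
    #{s | t s = w} = (if t 0 = w then 1 else 0) + #{s | Fin.tail t s = w} := by
  rw [card_filter, card_filter, Fin.sum_univ_succ]
  rfl

lemma card_filter_eq_card_filter_ne_zero_add_one {r : ℕ} {t : Fin (r + 1) → V} {w : V}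
    (h0 : t 0 = w) : #{s | t s = w} = #{s | s ≠ 0 ∧ t s = w} + 1 := by
  have : ({s | s ≠ 0 ∧ t s = w} : Finset _) = ({s | t s = w} : Finset _).erase 0 := by
    ext s; simp [and_comm]
  rw [this, card_erase_add_one (by simp [h0])]

variable [Fintype V]

def realizers (r : ℕ) (f : V → ℕ) : Finset (Fin r → V) :=
  {t | ∀ v, #{s | t s = v} = f v}

@[simp]
lemma mem_realizers {r : ℕ} {f : V → ℕ} {t : Fin r → V} :
    t ∈ realizers r f ↔ ∀ v, #{s | t s = v} = f v := by
  simp [realizers]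

lemma filter_realizers_head_eq_empty {r : ℕ} {f : V → ℕ} {v : V} (hv : f v = 0) :
    {t ∈ realizers (r + 1) f | t 0 = v} = ∅ := by
  refine filter_eq_empty_iff.mpr fun t ht h0 => ?_
  have := (mem_realizers.mp ht) v
  rw [card_filter_eq_card_filter_ne_zero_add_one h0] at this
  omega

lemma mem_realizers_iff_tail {r : ℕ} {f : V → ℕ} {v : V} (hv : f v ≠ 0)
    {t : Fin (r + 1) → V} (h0 : t 0 = v) :
    t ∈ realizers (r + 1) f ↔ Fin.tail t ∈ realizers r (update f v (f v - 1)) := by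
  simp only [mem_realizers]
  refine forall_congr' fun w => ?_
  rw [card_filter_fin_succ, h0]
  by_cases hw : w = v
  · subst hw; simp only [if_pos, update_self]; omega
  · simp only [if_neg (Ne.symm hw), update_of_ne hw]; omega

lemma card_filter_realizers_head {r : ℕ} {f : V → ℕ} {v : V} (hv : f v ≠ 0) :
    #{t ∈ realizers (r + 1) f | t 0 = v} = #(realizers r (update f v (f v - 1))) := by
  refine card_bij' (fun t _ => Fin.tail t) (fun t _ => Fin.cons v t) (fun t ht => ?_)
    (fun t ht => ?_) (fun t ht => ?_) (fun t _ => Fin.tail_cons (α := fun _ => V) v t)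
  · rw [mem_filter] at ht
    exact (mem_realizers_iff_tail hv ht.2).mp ht.1
  · have h0 : (Fin.cons v t : Fin (r + 1) → V) 0 = v := Fin.cons_zero _ _
    rw [mem_filter, mem_realizers_iff_tail hv h0]
    exact ⟨by simpa using ht, h0⟩
  · rw [mem_filter] at ht
    rw [← ht.2]
    exact Fin.cons_self_tail t

lemma sum_update_pred {f : V → ℕ} {v : V} (hv : f v ≠ 0) :
    ∑ w, update f v (f v - 1) w = ∑ w, f w - 1 := by
  rw [sum_update_of_mem (mem_univ v), sdiff_singleton_eq_erase,
    ← add_sum_erase _ f (mem_univ v)]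
  omega

lemma prod_factorial_eq_mul_prod_factorial_update_pred {f : V → ℕ} {v : V} (hv : f v ≠ 0) :
    ∏ w, (f w)! = f v * ∏ w, (update f v (f v - 1) w)! := by
  rw [← mul_prod_erase univ _ (mem_univ v), ← mul_prod_erase univ _ (mem_univ v),
    update_self, ← mul_assoc, mul_factorial_pred hv]
  congr 1
  exact prod_congr rfl fun w hw => by rw [update_of_ne (ne_of_mem_erase hw)]

lemma prod_factorial_mul_card_filter_realizers_head_eq_mul {r : ℕ} {f : V → ℕ} {v : V}
    (hv : f v ≠ 0) :
    (∏ w, (f w)!) * #{t ∈ realizers (r + 1) f | t 0 = v}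
      = f v * ((∏ w, (update f v (f v - 1) w)!) * #(realizers r (update f v (f v - 1)))) := by
  rw [card_filter_realizers_head hv, prod_factorial_eq_mul_prod_factorial_update_pred hv,
    mul_assoc]

theorem prod_factorial_mul_card_realizers {r : ℕ} {f : V → ℕ} (hf : ∑ v, f v = r) :
    (∏ v, (f v)!) * #(realizers r f) = r ! := by
  induction r generalizing f with
  | zero =>
    have hf0 : ∀ v, f v = 0 := fun v => (sum_eq_zero_iff.mp hf) v (mem_univ v)
    have : realizers 0 f = univ := eq_univ_of_forall fun t => by simp [hf0]
    simp [hf0, this]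
  | succ r ih =>
    have hhead : ∀ v, (∏ w, (f w)!) * #{t ∈ realizers (r + 1) f | t 0 = v} = f v * r ! := by
      intro v
      by_cases hv : f v = 0
      · simp [filter_realizers_head_eq_empty hv, hv]
      · rw [prod_factorial_mul_card_filter_realizers_head_eq_mul hv,
          ih (by rw [sum_update_pred hv, hf]; rfl)]
    rw [card_eq_sum_card_fiberwise (f := fun t => t 0) fun t _ => mem_univ (t 0), mul_sum,
      sum_congr rfl fun v _ => hhead v, ← sum_mul, hf, factorial_succ]

theorem prod_factorial_mul_card_filter_realizers_head {r : ℕ} {f : V → ℕ}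
    (hf : ∑ v, f v = r + 1) {v : V} (hv : f v ≠ 0) :
    (∏ w, (f w)!) * #{t ∈ realizers (r + 1) f | t 0 = v} = f v * r ! := by
  rw [prod_factorial_mul_card_filter_realizers_head_eq_mul hv,
    prod_factorial_mul_card_realizers (by rw [sum_update_pred hv, hf]; rfl)]

end Realizations

section HeadTuples

variable {V : Type*} [Fintype V] [DecidableEq V]

def headTuples (r : ℕ) (w : V) (m : ℕ) : Finset (Fin (r + 1) → V) :=
  {t | t 0 = w ∧ #{s | s ≠ 0 ∧ t s = w} = m}

lemma filter_headTuples_realizers {r : ℕ} (f : V → ℕ) (w : V) (m : ℕ) :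
    {t ∈ headTuples r w m | t ∈ realizers (r + 1) f}
      = if f w = m + 1 then {t ∈ realizers (r + 1) f | t 0 = w} else ∅ := by
  have hcard : ∀ t ∈ realizers (r + 1) f, t 0 = w → #{s | s ≠ 0 ∧ t s = w} + 1 = f w :=
    fun t ht h0 => (card_filter_eq_card_filter_ne_zero_add_one h0).symm.trans
      (mem_realizers.mp ht w)
  split_ifs with hw
  · ext t
    simp only [headTuples, mem_filter, mem_univ, true_and]
    constructor
    · rintro ⟨⟨h0, -⟩, ht⟩
      exact ⟨ht, h0⟩
    · rintro ⟨ht, h0⟩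
      exact ⟨⟨h0, by have := hcard t ht h0; omega⟩, ht⟩
  · refine filter_eq_empty_iff.mpr fun t ht hreal => hw ?_
    simp only [headTuples, mem_filter, mem_univ, true_and] at ht
    rw [← hcard t hreal ht.1, ht.2]

lemma sum_headTuples_ite_realizers {r : ℕ} {f : V → ℕ} (hf : ∑ v, f v = r + 1) (w : V)
    (m : ℕ) :
    ∑ t ∈ headTuples r w m,
        (if ∀ v, #{s | t s = v} = f v then ((∏ v, (f v)! : ℕ) : ℝ) / r ! else 0)
      = if f w = m + 1 then (f w : ℝ) else 0 := by
  simp only [← mem_realizers, ← sum_filter, sum_const, nsmul_eq_mul,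
    filter_headTuples_realizers, apply_ite card, card_empty]
  split_ifs with hw
  · have hcount := prod_factorial_mul_card_filter_realizers_head hf (v := w) (by omega)
    rw [mul_div_assoc', div_eq_iff (by positivity)]
    exact_mod_cast (mul_comm _ _).trans hcount
  · simp

end HeadTuples

lemma sum_strEdge {n p r : ℕ} {e : Fin p → Fin n → ℕ} {k : Fin p} (hk : ∑ j, e k j ≤ r) :
    ∑ v, strEdge n p r e k v = r := by
  simp only [Fintype.sum_sum_type, strEdge, univ_unique, sum_singleton]
  omega

/-- For a hb-graph on `Fin n` with hb-edges of m-cardinalities `ρ_k` satisfying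
`1 ≤ ρ_k ≤ r`, where `r ≥ 2` is the m-range: for every `q` with `1 ≤ q ≤ r−1`,
the sum of the entries of the straightforward e-adjacency hypermatrix over all
tuples whose first coordinate is the null vertex `N_1` and such that exactly
`r − q − 1` of the remaining `r − 1` coordinates equal `N_1` is
`(r − q) · |{k : ρ_k = q}|`; hence `|{k : ρ_k = q}|` is retrieved by dividing this
sum by `r − q`. -/
theorem stmt12 (n p r : ℕ) (hr : 2 ≤ r) (e : Fin p → Fin n → ℕ)
    (hub : ∀ k, ∑ j, e k j ≤ r) :
    ∀ q : ℕ, 1 ≤ q → q ≤ r - 1 →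
      (∑ t ∈ Finset.univ.filter
          (fun t : Fin r → Fin n ⊕ Unit =>
            t ⟨0, by omega⟩ = Sum.inr () ∧
            (Finset.univ.filter
              (fun s : Fin r => s ≠ ⟨0, by omega⟩ ∧ t s = Sum.inr ())).card = r - q - 1),
        Astr n p r e t)
        = (((r - q) *
            (Finset.univ.filter (fun k : Fin p => ∑ j, e k j = q)).card : ℕ) : ℝ) ∧
      ((Finset.univ.filter (fun k : Fin p => ∑ j, e k j = q)).card : ℝ)
        = (∑ t ∈ Finset.univ.filter
              (fun t : Fin r → Fin n ⊕ Unit =>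
                t ⟨0, by omega⟩ = Sum.inr () ∧
                (Finset.univ.filter
                  (fun s : Fin r => s ≠ ⟨0, by omega⟩ ∧ t s = Sum.inr ())).card = r - q - 1),
            Astr n p r e t) / ((r - q : ℕ) : ℝ) := by
  obtain ⟨r, rfl⟩ : ∃ r', r = r' + 1 := ⟨r - 1, by omega⟩
  intro q hq1 hq2
  have hnull : ∀ k, strEdge n p (r + 1) e k (Sum.inr ()) = r + 1 - q - 1 + 1 ↔ ∑ j, e k j = q :=
    fun k => by simp only [strEdge]; omega
  have hsum : ∑ t ∈ headTuples r (Sum.inr ()) (r + 1 - q - 1), Astr n p (r + 1) e t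
      = (((r + 1 - q) * #{k | ∑ j, e k j = q} : ℕ) : ℝ) := by
    simp only [Astr, Nat.add_sub_cancel]
    rw [sum_comm]
    simp only [sum_headTuples_ite_realizers (sum_strEdge (hub _)), hnull]
    have hnull_val : ∀ k ∈ ({k | ∑ j, e k j = q} : Finset (Fin p)),
        (strEdge n p (r + 1) e k (Sum.inr ()) : ℝ) = ((r + 1 - q : ℕ) : ℝ) :=
      fun k hk => by simp only [strEdge, (mem_filter.mp hk).2]
    rw [← sum_filter, sum_congr rfl hnull_val, sum_const, nsmul_eq_mul, Nat.cast_mul, mul_comm]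
  have hne : ((r + 1 - q : ℕ) : ℝ) ≠ 0 := by exact_mod_cast (by omega : r + 1 - q ≠ 0)
  refine ⟨hsum, ?_⟩
  rw [eq_div_iff hne]
  -- the statement's `⟨0, _⟩ : Fin (r + 1)` is definitionally `0`, so `hsum` applies to its sum
  refine Eq.trans ?_ hsum.symm
  push_cast
  ring
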